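/- arXiv:0708.1745 — 2 statements merged into one kernel-verified Lean document; each statement's English description precedes it below -/
import Mathlib

section
/- For every natural number n, every natural number p with p ≤ n, and all real numbers K, L, M: ∑_{s=0}^{p} C(L+s-1, s) · C(K+n-s-1, p-s) · C(L+M+n+s-1, n-p) = ∑_{t=0}^{min(p, n-p)} (-1)^t · C(-L, t) · C(K+L+n-1, p-t) · C(L+M+n-1, n-p-t). -/
/-- Generalized binomial coefficient `C(x, m) = x(x-1)⋯(x-m+1)/m!` for a real
number `x` and a natural number `m`. -/
noncomputable def gbinom (x : ℝ) (m : ℕ) : ℝ :=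
  (∏ i ∈ Finset.range m, (x - i)) / m.factorial

lemma descPoch_smeval (x : ℝ) (m : ℕ) :
    (descPochhammer ℤ m).smeval x = ∏ i ∈ Finset.range m, (x - i) := by
  induction m with
  | zero => simp [descPochhammer_zero]
  | succ k ih =>
      rw [descPochhammer_succ_right, Polynomial.smeval_mul, ih, Finset.prod_range_succ,
        Polynomial.smeval_sub, Polynomial.smeval_X, Polynomial.smeval_natCast]
      simp

lemma gbinom_eq_choose (x : ℝ) (m : ℕ) : gbinom x m = Ring.choose x m := by
  have h2 := Ring.descPochhammer_eq_factorial_smul_choose x m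
  rw [descPoch_smeval] at h2
  have hm : (m.factorial : ℝ) ≠ 0 := by exact_mod_cast m.factorial_ne_zero
  rw [gbinom, h2, nsmul_eq_mul, mul_div_cancel_left₀ _ hm]

lemma gbinom_natCast (s j : ℕ) : gbinom (s : ℝ) j = (s.choose j : ℝ) := by
  rw [gbinom_eq_choose, Ring.choose_natCast]

/-- Chu–Vandermonde, range form. -/
lemma gbinom_add (x y : ℝ) (m : ℕ) :
    gbinom (x + y) m = ∑ j ∈ Finset.range (m + 1), gbinom x j * gbinom y (m - j) := by
  rw [gbinom_eq_choose, Ring.add_choose_eq m (Commute.all x y),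
    Finset.Nat.sum_antidiagonal_eq_sum_range_succ_mk]
  exact Finset.sum_congr rfl fun j _ => by rw [gbinom_eq_choose, gbinom_eq_choose]

/-- Trinomial revision. -/
lemma gbinom_trinomial (x : ℝ) (t u : ℕ) :
    ((t + u).choose t : ℝ) * gbinom x (t + u) = gbinom x t * gbinom (x - t) u := by
  have h := Ring.choose_smul_choose x (n := t + u) (k := t) (Nat.le_add_right t u)
  rw [nsmul_eq_mul, Nat.add_sub_cancel_left] at h
  rw [gbinom_eq_choose, gbinom_eq_choose, gbinom_eq_choose, h]

lemma gbinom_reflect (x : ℝ) (m : ℕ) : gbinom x m = (-1 : ℝ)^m * gbinom ((m : ℝ) - 1 - x) m := by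
  unfold gbinom
  rw [mul_div_assoc']
  congr 1
  rw [← Finset.prod_range_reflect (fun j => x - (j : ℝ)) m]
  calc ∏ j ∈ Finset.range m, (x - ((m - 1 - j : ℕ) : ℝ))
      = ∏ j ∈ Finset.range m, (-1) * ((m : ℝ) - 1 - x - j) := by
        refine Finset.prod_congr rfl fun i hi => ?_
        have hi' : i < m := Finset.mem_range.mp hi
        have : ((m - 1 - i : ℕ) : ℝ) = (m : ℝ) - 1 - i := by
          have h1 : 1 + i ≤ m := by omega
          push_cast [Nat.sub_sub, Nat.cast_sub h1]
          ring
        rw [this]; ring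
    _ = (-1 : ℝ)^m * ∏ j ∈ Finset.range m, ((m : ℝ) - 1 - x - j) := by
        rw [Finset.prod_mul_distrib, Finset.prod_const, Finset.card_range]

lemma gbinom_shift (a : ℝ) (u : ℕ) : gbinom (a + u) u = (-1:ℝ)^u * gbinom (-a - 1) u := by
  rw [gbinom_reflect (-a-1) u, ← mul_assoc, ← mul_pow]
  norm_num
  congr 1
  ring

/-- Parallel summation form of Vandermonde. -/
lemma gbinom_parallel (a b : ℝ) (m : ℕ) :
    ∑ u ∈ Finset.range (m + 1), gbinom (a + u) u * gbinom (b + ((m - u : ℕ) : ℝ)) (m - u)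
      = gbinom (a + b + m + 1) m := by
  have key : ∀ u ∈ Finset.range (m + 1),
      gbinom (a + u) u * gbinom (b + ((m - u : ℕ) : ℝ)) (m - u)
        = (-1:ℝ)^m * (gbinom (-a - 1) u * gbinom (-b - 1) (m - u)) := by
    intro u hu
    have hu' : u ≤ m := Nat.lt_succ_iff.mp (Finset.mem_range.mp hu)
    rw [gbinom_shift a u, gbinom_shift b (m - u)]
    have hpow : (-1:ℝ)^u * (-1:ℝ)^(m - u) = (-1:ℝ)^m := by
      rw [← pow_add, Nat.add_sub_cancel' hu']
    rw [← hpow]; ring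
  rw [Finset.sum_congr rfl key, ← Finset.mul_sum, ← gbinom_add]
  have h2 := gbinom_shift (a + b + 1) m
  rw [show (-a - 1 + (-b - 1) : ℝ) = -(a + b + 1) - 1 by ring, ← h2]
  congr 1
  ring

/-- The inner sum identity. -/
lemma my_inner_sum (n p j : ℕ) (hj : j ≤ p) (K L : ℝ) :
    ∑ s ∈ Finset.range (p + 1),
        gbinom (L + s - 1) s * gbinom (K + n - s - 1) (p - s) * (s.choose j : ℝ)
      = (-1:ℝ)^j * gbinom (-L) j * gbinom (K + L + n - 1) (p - j) := by
  set m := p - j with hm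
  rw [show p + 1 = j + (m + 1) by omega, Finset.sum_range_add]
  have h1 : ∑ s ∈ Finset.range j,
      gbinom (L + s - 1) s * gbinom (K + n - s - 1) (p - s) * (s.choose j : ℝ) = 0 := by
    refine Finset.sum_eq_zero fun s hs => ?_
    rw [Nat.choose_eq_zero_of_lt (Finset.mem_range.mp hs)]
    simp
  rw [h1, zero_add]
  have key : ∀ u ∈ Finset.range (m + 1),
      gbinom (L + ↑(j + u) - 1) (j + u) * gbinom (K + n - ↑(j + u) - 1) (p - (j + u)) *
          ((j + u).choose j : ℝ)
        = ((-1:ℝ)^j * gbinom (-L) j) *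
            (gbinom ((L + j - 1) + u) u *
              gbinom ((K + n - p - 1) + ((m - u : ℕ) : ℝ)) (m - u)) := by
    intro u hu
    have hu' : u ≤ m := Nat.lt_succ_iff.mp (Finset.mem_range.mp hu)
    have e1 : gbinom (L + ↑(j + u) - 1) (j + u)
        = (-1:ℝ)^(j + u) * gbinom (-L) (j + u) := by
      have := gbinom_shift (L - 1) (j + u)
      rw [show (L - 1 + ↑(j + u) : ℝ) = L + ↑(j + u) - 1 by ring,
        show (-(L - 1) - 1 : ℝ) = -L by ring] at this
      exact this
    have e2 : ((j + u).choose j : ℝ) * gbinom (-L) (j + u)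
        = gbinom (-L) j * gbinom (-L - j) u := gbinom_trinomial (-L) j u
    have e3 : gbinom ((L + j - 1) + u) u = (-1:ℝ)^u * gbinom (-L - j) u := by
      have := gbinom_shift (L + j - 1) u
      rw [show (-(L + j - 1) - 1 : ℝ) = -L - j by ring] at this
      exact this
    have e4 : p - (j + u) = m - u := by omega
    have e5 : (K + n - ↑(j + u) - 1 : ℝ) = (K + n - p - 1) + ((m - u : ℕ) : ℝ) := by
      have : ((m - u : ℕ) : ℝ) = (p : ℝ) - j - u := by
        have hjp : j + u ≤ p := by omega
        push_cast [hm, Nat.sub_sub, Nat.cast_sub hjp]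
        ring
      rw [this]
      push_cast
      ring
    rw [e4, e5, e1, pow_add]
    calc (-1:ℝ)^j * (-1:ℝ)^u * gbinom (-L) (j + u) *
          gbinom (K + n - p - 1 + ((m - u : ℕ) : ℝ)) (m - u) * ((j + u).choose j : ℝ)
        = (-1:ℝ)^j * (-1:ℝ)^u * (((j + u).choose j : ℝ) * gbinom (-L) (j + u)) *
            gbinom (K + n - p - 1 + ((m - u : ℕ) : ℝ)) (m - u) := by ring
      _ = (-1:ℝ)^j * (-1:ℝ)^u * (gbinom (-L) j * gbinom (-L - j) u) *
            gbinom (K + n - p - 1 + ((m - u : ℕ) : ℝ)) (m - u) := by rw [e2]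
      _ = ((-1:ℝ)^j * gbinom (-L) j) * (((-1:ℝ)^u * gbinom (-L - j) u) *
            gbinom (K + n - p - 1 + ((m - u : ℕ) : ℝ)) (m - u)) := by ring
      _ = _ := by rw [← e3]
  rw [Finset.sum_congr rfl key, ← Finset.mul_sum, gbinom_parallel]
  have hmr : ((m : ℕ) : ℝ) = (p : ℝ) - j := by
    push_cast [hm, Nat.cast_sub hj]; ring
  rw [show (L + j - 1 + (K + ↑n - ↑p - 1) + (m : ℝ) + 1) = K + L + n - 1 + ((m:ℝ) - ((p:ℝ) - j)) by ring, hmr]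
  ring_nf

theorem eholzer_rhs_resummation (n p : ℕ) (hp : p ≤ n) (K L M : ℝ) :
    ∑ s ∈ Finset.range (p + 1),
      gbinom (L + s - 1) s * gbinom (K + n - s - 1) (p - s) *
        gbinom (L + M + n + s - 1) (n - p)
      =
    ∑ t ∈ Finset.range (min p (n - p) + 1),
      (-1 : ℝ) ^ t * gbinom (-L) t * gbinom (K + L + n - 1) (p - t) *
        gbinom (L + M + n - 1) (n - p - t) := by
  set q := n - p with hq
  have step1 : ∀ s ∈ Finset.range (p + 1),
      gbinom (L + s - 1) s * gbinom (K + n - s - 1) (p - s) * gbinom (L + M + n + s - 1) q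
        = ∑ j ∈ Finset.range (q + 1),
            gbinom (L + s - 1) s * gbinom (K + n - s - 1) (p - s) * (s.choose j : ℝ) *
              gbinom (L + M + n - 1) (q - j) := by
    intro s _
    rw [show (L + M + ↑n + ↑s - 1 : ℝ) = (s : ℝ) + (L + M + n - 1) by ring, gbinom_add,
      Finset.mul_sum]
    exact Finset.sum_congr rfl fun j _ => by rw [gbinom_natCast]; ring
  rw [Finset.sum_congr rfl step1, Finset.sum_comm]
  have step2 : ∀ j ∈ Finset.range (q + 1),
      ∑ s ∈ Finset.range (p + 1),
          gbinom (L + s - 1) s * gbinom (K + n - s - 1) (p - s) * (s.choose j : ℝ) *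
            gbinom (L + M + n - 1) (q - j)
        = (∑ s ∈ Finset.range (p + 1),
            gbinom (L + s - 1) s * gbinom (K + n - s - 1) (p - s) * (s.choose j : ℝ)) *
              gbinom (L + M + n - 1) (q - j) := by
    intro j _
    rw [Finset.sum_mul]
  rw [Finset.sum_congr rfl step2]
  have hsub : Finset.range (min p q + 1) ⊆ Finset.range (q + 1) := by
    apply Finset.range_subset_range.mpr; omega
  rw [← Finset.sum_subset hsub ?_]
  · refine Finset.sum_congr rfl fun j hj => ?_
    have hjp : j ≤ p := by
      have := Finset.mem_range.mp hj; omega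
    rw [my_inner_sum n p j hjp K L]
  · intro j hjq hjmin
    have hj1 : p < j := by
      have h1 := Finset.mem_range.mp hjq
      have h2 : ¬ j < min p q + 1 := fun h => hjmin (Finset.mem_range.mpr h)
      omega
    have : ∑ s ∈ Finset.range (p + 1),
        gbinom (L + s - 1) s * gbinom (K + n - s - 1) (p - s) * (s.choose j : ℝ) = 0 := by
      refine Finset.sum_eq_zero fun s hs => ?_
      have : s < j := by have := Finset.mem_range.mp hs; omega
      rw [Nat.choose_eq_zero_of_lt this]
      simp
    rw [this, zero_mul]
end

section
/- For every natural number n and all real numbers Y, Z (standing for 2y and 2z), Zagier's identity at a = 1/2 holds in the cleared-denominator form: (-1)^n · ∑_{r=0}^{n} C(Y, 2r) · C(Y-r, n-r) · C(Z+1, 2(n-r)) · C(Z-n+r, r) · (2r)! · (2(n-r))! = (n!)^2 · C(2n-Y-Z-2, n) · C(Y, n) · C(Z, n). -/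
open Finset

lemma fact_ne (m : ℕ) : ((m.factorial : ℝ)) ≠ 0 := by
  exact_mod_cast m.factorial_ne_zero

lemma gbinom_zero (x : ℝ) : gbinom x 0 = 1 := by simp [gbinom]

lemma gbinom_one (x : ℝ) : gbinom x 1 = x := by simp [gbinom]

lemma gbinom_mul_factorial (x : ℝ) (m : ℕ) :
    gbinom x m * m.factorial = ∏ i ∈ Finset.range m, (x - i) := by
  rw [gbinom, div_mul_cancel₀ _ (fact_ne m)]

lemma fact_succ_cast (m : ℕ) : ((m+1).factorial : ℝ) = (m+1) * m.factorial := by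
  push_cast [Nat.factorial_succ]; ring

lemma gbinom_succ (x : ℝ) (m : ℕ) :
    gbinom x (m + 1) = gbinom x m * (x - m) / (m + 1) := by
  rw [gbinom, gbinom, prod_range_succ, fact_succ_cast, div_mul_eq_mul_div, div_div]
  rw [mul_comm ((m:ℝ)+1) m.factorial]

lemma gbinom_succ_left (x : ℝ) (m : ℕ) :
    gbinom (x + 1) (m + 1) = (x + 1) * gbinom x m / (m + 1) := by
  rw [gbinom, gbinom, prod_range_succ', fact_succ_cast]
  have h2 : ∀ i ∈ Finset.range m, (x + 1 - (((i+1) : ℕ) : ℝ)) = x - i := by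
    intro i _; push_cast; ring
  rw [Finset.prod_congr rfl h2]
  push_cast
  rw [mul_div_assoc, mul_comm ((m:ℝ)+1) m.factorial, ← div_div]
  ring

lemma gbinom_pascal (x : ℝ) (m : ℕ) :
    gbinom (x + 1) (m + 1) = gbinom x (m + 1) + gbinom x m := by
  rw [gbinom_succ_left, gbinom_succ]
  have h2 : ((m:ℝ)+1) ≠ 0 := by positivity
  field_simp
  ring

lemma gbinom_pascal' (x : ℝ) (m : ℕ) :
    gbinom x (m + 1) = gbinom (x - 1) (m + 1) + gbinom (x - 1) m := by
  have := gbinom_pascal (x - 1) m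
  simpa using this


lemma gbinom_neg (x : ℝ) (m : ℕ) :
    gbinom x m = (-1) ^ m * gbinom ((m : ℝ) - 1 - x) m := by
  rw [gbinom, gbinom, ← mul_div_assoc]
  congr 1
  have h1 : ∏ i ∈ Finset.range m, (x - (i:ℝ)) = ∏ i ∈ Finset.range m, (-1) * ((i:ℝ) - x) := by
    refine Finset.prod_congr rfl fun i _ => by ring
  rw [h1, Finset.prod_mul_distrib, Finset.prod_const, Finset.card_range]
  congr 1
  have h2 := Finset.prod_range_reflect (fun j => (j : ℝ) - x) m
  rw [← h2]
  refine Finset.prod_congr rfl fun j hj => ?_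
  simp only [Finset.mem_range] at hj
  rw [Nat.sub_sub]
  rw [Nat.cast_sub (by omega : 1 + j ≤ m)]
  push_cast
  ring

noncomputable def wz (Z : ℝ) : ℕ → ℝ
  | 0 => 1
  | (s+1) => gbinom (Z - ((s:ℝ)+1)) (s+1) + 2 * gbinom (Z - ((s:ℝ)+1)) s

lemma wz_mul_factorial (Z : ℝ) (s : ℕ) :
    wz Z (s+1) * ((s+1).factorial : ℝ)
      = (Z + 1) * ∏ i ∈ Finset.range s, (Z - ((s:ℝ)+1) - i) := by
  simp only [wz]
  rw [gbinom, gbinom, prod_range_succ, fact_succ_cast]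
  have h1 := fact_ne s
  have h2 : ((s:ℝ)+1) ≠ 0 := by positivity
  field_simp
  ring

lemma wz_neg_one (s : ℕ) : wz (-1) (s+1) = 0 := by
  have h := wz_mul_factorial (-1) s
  have h2 : ((-1:ℝ) + 1) = 0 := by ring
  rw [h2, zero_mul] at h
  exact (mul_eq_zero.mp h).resolve_right (fact_ne _)

lemma wz_pascal (Z : ℝ) (s : ℕ) :
    wz (Z + 1) (s+1) = wz Z (s+1) + wz (Z - 1) s := by
  cases s with
  | zero =>
      simp only [wz]
      norm_num
      rw [gbinom_one, gbinom_one, gbinom_zero, gbinom_zero]; ring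
  | succ t =>
      simp only [wz]
      push_cast
      have e1 : Z + 1 - ((t:ℝ)+1+1) = (Z - ((t:ℝ)+1+1)) + 1 := by ring
      have e2 : Z - 1 - ((t:ℝ)+1) = Z - ((t:ℝ)+1+1) := by ring
      rw [e1, e2, gbinom_pascal (Z - ((t:ℝ)+1+1)) (t+1), gbinom_pascal (Z - ((t:ℝ)+1+1)) t]
      ring

lemma prod_shift (x : ℝ) (a b : ℕ) :
    ∏ i ∈ Finset.range (a+b), (x - i) = (∏ i ∈ Finset.range a, (x - i)) *
      ∏ i ∈ Finset.range b, (x - a - i) := by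
  rw [prod_range_add]
  congr 1
  refine Finset.prod_congr rfl fun i _ => by push_cast; ring

lemma prod_pull (x : ℝ) (m : ℕ) :
    ∏ i ∈ Finset.range (m+1), (x + 1 - i) = (x+1) * ∏ i ∈ Finset.range m, (x - i) := by
  rw [prod_range_succ']
  have h : ∀ i ∈ Finset.range m, (x + 1 - (((i+1):ℕ):ℝ)) = x - i := by
    intro i _; push_cast; ring
  rw [Finset.prod_congr rfl h]
  simp [mul_comm]

lemma claimA (r s : ℕ) (Y Z : ℝ) :
    gbinom Y (2*r) * gbinom (Y - r) s * gbinom (Z+1) (2*s) * gbinom (Z - s) r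
      * ((2*r).factorial : ℝ) * ((2*s).factorial : ℝ)
    = (∏ i ∈ Finset.range (r+s), (Y - i)) * (∏ i ∈ Finset.range (r+s), (Z - i))
        * gbinom (Y - r) r * wz Z s := by
  cases s with
  | zero =>
      simp only [wz, Nat.cast_zero, sub_zero, Nat.mul_zero, Nat.add_zero, gbinom_zero,
        Nat.factorial_zero, Nat.cast_one, mul_one, one_mul]
      rw [show 2*r = r + r from two_mul r]
      simp only [gbinom]
      rw [prod_shift Y r r]
      have h1 := fact_ne r
      have h2 := fact_ne (r+r)
      field_simp
  | succ t =>
      have hw : wz Z (t+1) = (Z + 1) * (∏ i ∈ Finset.range t, (Z - ((t:ℝ)+1) - i))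
          / ((t+1).factorial : ℝ) := by
        rw [eq_div_iff (fact_ne _)]; exact wz_mul_factorial Z t
      rw [hw]
      simp only [gbinom]
      rw [show 2*r = r + r from two_mul r, prod_shift Y r r,
        show r + (t+1) = r + (t+1) from rfl, prod_shift Y r (t+1),
        show 2*(t+1) = (2*t+1)+1 by ring, prod_pull Z (2*t+1),
        show 2*t+1 = (t+1)+t by ring, prod_shift Z (t+1) t,
        show r + (t+1) = (t+1) + r by ring, prod_shift Z (t+1) r]
      push_cast
      have h1 := fact_ne r
      have h2 := fact_ne (r+r)
      have h3 := fact_ne (t+1)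
      have h4 := fact_ne (t+1+t+1)
      field_simp

open Polynomial in
noncomputable def pgb (b : ℝ) (m : ℕ) : Polynomial ℝ :=
  (∏ i ∈ Finset.range m, (X + C (b - i))) * C (((m.factorial : ℝ))⁻¹)

open Polynomial in
lemma pgb_eval (b : ℝ) (m : ℕ) (Z : ℝ) : (pgb b m).eval Z = gbinom (Z + b) m := by
  simp only [pgb, eval_mul, eval_prod, eval_add, eval_X, eval_C, gbinom, div_eq_mul_inv]
  congr 1
  refine Finset.prod_congr rfl fun i _ => by ring

open Polynomial in
noncomputable def pgbn (b : ℝ) (m : ℕ) : Polynomial ℝ :=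
  (∏ i ∈ Finset.range m, (C (b - i) - X)) * C (((m.factorial : ℝ))⁻¹)

open Polynomial in
lemma pgbn_eval (b : ℝ) (m : ℕ) (Z : ℝ) : (pgbn b m).eval Z = gbinom (b - Z) m := by
  simp only [pgbn, eval_mul, eval_prod, eval_sub, eval_X, eval_C, gbinom, div_eq_mul_inv]
  congr 1
  refine Finset.prod_congr rfl fun i _ => by ring

noncomputable def wpoly : ℕ → Polynomial ℝ
  | 0 => 1
  | (s+1) => pgb (-((s:ℝ)+1)) (s+1) + Polynomial.C 2 * pgb (-((s:ℝ)+1)) s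

lemma wpoly_eval (s : ℕ) (Z : ℝ) : (wpoly s).eval Z = wz Z s := by
  cases s with
  | zero => simp [wpoly, wz]
  | succ t =>
      simp only [wpoly, wz, Polynomial.eval_add, Polynomial.eval_mul, Polynomial.eval_C,
        pgb_eval]
      rw [show Z + -((t:ℝ)+1) = Z - ((t:ℝ)+1) by ring]

lemma claimB (n : ℕ) (Y : ℝ) : ∀ Z : ℝ,
    ∑ r ∈ Finset.range (n+1), gbinom (Y - r) r * wz Z (n - r)
      = (-1)^n * gbinom (2*n - Y - Z - 2) n := by
  induction n with
  | zero => intro Z; simp [wz, gbinom_zero]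
  | succ n IH =>
      -- difference function is invariant under Z ↦ Z+1
      have hD1 : ∀ W : ℝ,
          ((∑ r ∈ Finset.range (n+2), gbinom (Y - r) r * wz (W+1) (n+1-r))
            - (-1)^(n+1) * gbinom (2*(n+1) - Y - (W+1) - 2) (n+1))
          = ((∑ r ∈ Finset.range (n+2), gbinom (Y - r) r * wz W (n+1-r))
            - (-1)^(n+1) * gbinom (2*(n+1) - Y - W - 2) (n+1)) := by
        intro W
        have key : ∀ r ∈ Finset.range (n+1),
            gbinom (Y - r) r * wz (W+1) (n+1-r)
              = gbinom (Y - r) r * wz W (n+1-r) + gbinom (Y - r) r * wz (W-1) (n-r) := by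
          intro r hr
          simp only [Finset.mem_range] at hr
          have h : n + 1 - r = (n - r) + 1 := by omega
          rw [h, wz_pascal]
          ring
        rw [Finset.sum_range_succ, Finset.sum_range_succ
          (fun r => gbinom (Y - r) r * wz W (n+1-r)), Finset.sum_congr rfl key,
          Finset.sum_add_distrib]
        have hIH := IH (W - 1)
        have hlast : wz (W+1) (n+1-(n+1)) = wz W (n+1-(n+1)) := by
          simp [wz]
        have hpas : gbinom (2*(n+1) - Y - W - 2) (n+1)
            = gbinom (2*(n+1) - Y - (W+1) - 2) (n+1) + gbinom (2*n - Y - (W-1) - 2) n := by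
          have := gbinom_pascal' (2*(n+1) - Y - W - 2 : ℝ) n
          rw [this]
          congr 2 <;> ring
        rw [hlast, hIH, hpas]
        push_cast
        ring
      have hD2 :
          ((∑ r ∈ Finset.range (n+2), gbinom (Y - r) r * wz (-1) (n+1-r))
            - (-1)^(n+1) * gbinom (2*(n+1) - Y - (-1) - 2) (n+1)) = 0 := by
        have hsum : (∑ r ∈ Finset.range (n+2), gbinom (Y - r) r * wz (-1) (n+1-r))
            = gbinom (Y - (n+1 : ℕ)) (n+1) := by
          rw [Finset.sum_eq_single_of_mem (n+1) (Finset.self_mem_range_succ (n+1))]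
          · simp [wz]
          · intro b hb hbne
            simp only [Finset.mem_range] at hb
            have h : n + 1 - b = (n - b) + 1 := by omega
            rw [h, wz_neg_one, mul_zero]
        rw [hsum]
        have hneg := gbinom_neg (Y - ((n+1 : ℕ) : ℝ)) (n+1)
        rw [hneg]
        have harg : ((n+1 : ℕ) : ℝ) - 1 - (Y - ((n+1:ℕ):ℝ)) = 2*(n+1) - Y - (-1) - 2 := by
          push_cast; ring
        rw [harg]
        ring
      intro Z
      -- polynomial argument
      have main : ∀ W : ℝ,
          ((∑ r ∈ Finset.range (n+2), gbinom (Y - r) r * wz W (n+1-r))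
            - (-1)^(n+1) * gbinom (2*(n+1) - Y - W - 2) (n+1)) = 0 := by
        set p : Polynomial ℝ :=
          (∑ r ∈ Finset.range (n+2), Polynomial.C (gbinom (Y - r) r) * wpoly (n+1-r))
            - Polynomial.C ((-1:ℝ)^(n+1)) * pgbn (2*(n+1) - Y - 2) (n+1) with hp
        have hpe : ∀ W : ℝ, p.eval W
            = ((∑ r ∈ Finset.range (n+2), gbinom (Y - r) r * wz W (n+1-r))
              - (-1)^(n+1) * gbinom (2*(n+1) - Y - W - 2) (n+1)) := by
          intro W
          simp only [hp, Polynomial.eval_sub, Polynomial.eval_finset_sum, Polynomial.eval_mul,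
            Polynomial.eval_C, wpoly_eval, pgbn_eval]
          rw [show (2*((n:ℝ)+1) - Y - 2) - W = 2*((n:ℝ)+1) - Y - W - 2 by ring]
        have hroot : ∀ m : ℕ, p.IsRoot ((m : ℝ) - 1) := by
          intro m
          induction m with
          | zero =>
              show p.eval _ = 0
              rw [show ((0:ℕ):ℝ) - 1 = (-1 : ℝ) by norm_num, hpe]
              exact hD2
          | succ m hm =>
              show p.eval _ = 0
              rw [show (((m+1:ℕ)):ℝ) - 1 = (((m:ℝ) - 1) + 1) by push_cast; ring, hpe, hD1]
              rw [← hpe]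
              exact hm
        have hp0 : p = 0 := by
          refine Polynomial.eq_zero_of_infinite_isRoot p ?_
          refine Set.infinite_of_injective_forall_mem
            (f := fun m : ℕ => (m : ℝ) - 1) ?_ ?_
          · intro a b hab
            simp only [sub_left_inj, Nat.cast_inj] at hab
            exact hab
          · intro m; exact hroot m
        intro W
        rw [← hpe, hp0, Polynomial.eval_zero]
      have := main Z
      push_cast at this ⊢
      linarith [this]

theorem zagier_identity_half (n : ℕ) (Y Z : ℝ) :
    (-1 : ℝ) ^ n *
      ∑ r ∈ Finset.range (n + 1),
        gbinom Y (2 * r) * gbinom (Y - r) (n - r) * gbinom (Z + 1) (2 * (n - r)) *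
          gbinom (Z - n + r) r * ((2 * r).factorial : ℝ) * ((2 * (n - r)).factorial : ℝ)
      =
    ((n.factorial : ℝ)) ^ 2 * gbinom (2 * n - Y - Z - 2) n * gbinom Y n * gbinom Z n := by
  have key : ∀ r ∈ Finset.range (n+1),
      gbinom Y (2 * r) * gbinom (Y - r) (n - r) * gbinom (Z + 1) (2 * (n - r)) *
          gbinom (Z - n + r) r * ((2 * r).factorial : ℝ) * ((2 * (n - r)).factorial : ℝ)
        = (∏ i ∈ Finset.range n, (Y - i)) * (∏ i ∈ Finset.range n, (Z - i))
            * (gbinom (Y - r) r * wz Z (n - r)) := by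
    intro r hr
    simp only [Finset.mem_range] at hr
    have hr' : r ≤ n := by omega
    have hA := claimA r (n - r) Y Z
    rw [show r + (n - r) = n by omega] at hA
    rw [show (Z - ((n - r : ℕ) : ℝ)) = Z - n + r by
      rw [Nat.cast_sub hr']; ring] at hA
    rw [hA]; ring
  rw [Finset.sum_congr rfl key, ← Finset.mul_sum, claimB n Y Z]
  have hY := gbinom_mul_factorial Y n
  have hZ := gbinom_mul_factorial Z n
  rw [← hY, ← hZ]
  have hsign : ((-1:ℝ))^(n*2) = 1 := by
    rw [pow_mul]
    norm_num
    rcases Nat.even_or_odd n with h | h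
    · left; exact h.neg_one_pow
    · right; exact h.neg_one_pow
  ring_nf
  rw [hsign]
  ring
end
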